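/- arXiv:2512.03909 — 2 statements merged into one kernel-verified Lean document; each statement's English description precedes it below -/
import Mathlib

section
/- Let A be a totally definite quaternion algebra over a totally real number field K of degree n, let Λ be an O_K-order in A, and let α be a positive rational number. Then the minimum of the ideal lattice (Λ, b_α) equals 2nα, i.e. min{ Tr_{K/ℚ}(trd(α x x̄)) : x ∈ Λ, x ≠ 0 } = 2nα, and the minimum is attained by x ∈ Λ if and only if nrd(x) = 1. -/
open Quaternion NumberField

/-- Reduced norm of a quaternion. -/
def nrd {K : Type*} [Field K] {a b : K} (x : ℍ[K, a, b]) : K :=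
  x.re ^ 2 - a * x.imI ^ 2 - b * x.imJ ^ 2 + a * b * x.imK ^ 2

open Finset in
lemma my_amgm (n : ℕ) (z : Fin n → ℝ) (hz : ∀ i, 0 < z i) (hp : 1 ≤ ∏ i, z i) :
    (n : ℝ) ≤ ∑ i, z i ∧ (∑ i, z i = n → ∀ i, z i = 1) := by
  have hlog : 0 ≤ ∑ i, Real.log (z i) := by
    rw [← Real.log_prod (fun i _ => (hz i).ne')]
    exact Real.log_nonneg hp
  have hle : ∀ i, Real.log (z i) ≤ z i - 1 := fun i => Real.log_le_sub_one_of_pos (hz i)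
  have hsum1 : ∑ i : Fin n, (z i - 1) = (∑ i, z i) - n := by
    rw [Finset.sum_sub_distrib]; simp
  constructor
  · have h := Finset.sum_le_sum (fun i (_ : i ∈ univ) => hle i)
    rw [hsum1] at h; linarith
  · intro hsumeq i
    by_contra hne
    have h := Finset.sum_lt_sum (fun j (_ : j ∈ univ) => hle j)
      ⟨i, Finset.mem_univ i, Real.log_lt_sub_one_of_pos (hz i) hne⟩
    rw [hsum1, hsumeq] at h; linarith

lemma my_norm_prod {K : Type*} [Field K] [NumberField K] (n : ℕ)
    (hdeg : Module.finrank ℚ K = n) (σ : Fin n → (K →+* ℝ))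
    (hσ : Function.Injective σ) (t : K) :
    ((Algebra.norm ℚ t : ℚ) : ℝ) = ∏ i, σ i t := by
  let g : Fin n → (K →ₐ[ℚ] ℂ) := fun i => (Complex.ofRealHom.comp (σ i)).toRatAlgHom
  have hginj : Function.Injective g := by
    intro i j hij
    apply hσ
    ext y
    have := congrArg (fun φ : K →ₐ[ℚ] ℂ => φ y) hij
    simp only [g] at this
    have h2 : Complex.ofRealHom ((σ i) y) = Complex.ofRealHom ((σ j) y) := this
    exact Complex.ofReal_injective h2
  have hgbij : Function.Bijective g := by
    refine (Fintype.bijective_iff_injective_and_card g).mpr ⟨hginj, ?_⟩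
    rw [Fintype.card_fin, ← hdeg, ← NumberField.Embeddings.card K ℂ]
    exact Fintype.card_congr (RingHom.equivRatAlgHom K ℂ)
  have h := Algebra.norm_eq_prod_embeddings ℚ ℂ (L := K) t
  rw [← Fintype.prod_bijective g hgbij _ (fun φ => φ t) (fun i => rfl)] at h
  have h2 : (algebraMap ℚ ℂ) (Algebra.norm ℚ t) = (((Algebra.norm ℚ t : ℚ) : ℝ) : ℂ) := by
    push_cast
    simp [eq_ratCast]
  rw [h2] at h
  have h3 : (((∏ i, σ i t : ℝ)) : ℂ) = ∏ i, g i t := by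
    push_cast; rfl
  rw [← h3] at h
  exact_mod_cast h

lemma my_isIntegral_mul_of_commute {R A : Type*} [CommRing R] [Ring A] [Algebra R A]
    {x y : A} (h : Commute x y) (hx : IsIntegral R x) (hy : IsIntegral R y) :
    IsIntegral R (x * y) := by
  let Sx := Algebra.adjoin R ({x} : Set A)
  let Sy := Algebra.adjoin R ({y} : Set A)
  have hcomm : ∀ v ∈ Sy, ∀ u ∈ Sx, Commute v u := by
    intro v hv u hu
    have h1 : Commute x v := Algebra.commute_of_mem_adjoin_singleton_of_commute hv h
    exact Algebra.commute_of_mem_adjoin_singleton_of_commute hu h1.symm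
  let N : Submodule R A := Subalgebra.toSubmodule Sx * Subalgebra.toSubmodule Sy
  have hmulN : ∀ p ∈ N, ∀ q ∈ N, p * q ∈ N := by
    intro p hp q hq
    refine Submodule.mul_induction_on hp (fun u hu v hv => ?_)
      (fun p₁ p₂ h₁ h₂ => by rw [add_mul]; exact N.add_mem h₁ h₂)
    refine Submodule.mul_induction_on hq (fun u' hu' v' hv' => ?_)
      (fun q₁ q₂ h₁ h₂ => by rw [mul_add]; exact N.add_mem h₁ h₂)
    have hc : v * u' = u' * v := hcomm v hv u' hu'
    have : u * v * (u' * v') = (u * u') * (v * v') := by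
      rw [mul_assoc, ← mul_assoc v u' v', hc, mul_assoc, ← mul_assoc]
    rw [this]
    exact Submodule.mul_mem_mul (Sx.mul_mem hu hu') (Sy.mul_mem hv hv')
  let S' : Subalgebra R A :=
    { carrier := N
      mul_mem' := fun {p q} hp hq => hmulN p hp q hq
      one_mem' := by
        have := Submodule.mul_mem_mul (M := Subalgebra.toSubmodule Sx)
          (N := Subalgebra.toSubmodule Sy) (Sx.one_mem) (Sy.one_mem)
        simpa using this
      add_mem' := fun {p q} hp hq => N.add_mem hp hq
      zero_mem' := N.zero_mem
      algebraMap_mem' := fun r => by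
        have := Submodule.mul_mem_mul (M := Subalgebra.toSubmodule Sx)
          (N := Subalgebra.toSubmodule Sy) (Sx.algebraMap_mem r) (Sy.one_mem)
        simpa using this }
  have hFG : (Subalgebra.toSubmodule S').FG := by
    have : Subalgebra.toSubmodule S' = N := Submodule.ext fun z => Iff.rfl
    rw [this]
    exact (hx.fg_adjoin_singleton).mul (hy.fg_adjoin_singleton)
  exact IsIntegral.of_mem_of_fg S' hFG _
    (Submodule.mul_mem_mul (Algebra.self_mem_adjoin_singleton R x)
      (Algebra.self_mem_adjoin_singleton R y))

set_option maxHeartbeats 1000000 in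
lemma my_nrd_int {K : Type*} [Field K] [NumberField K] {a b : K}
    (Λ : Subring ℍ[K, a, b])
    (hscalar : ∀ c : 𝓞 K, ∀ v ∈ Λ, algebraMap K ℍ[K, a, b] (c : K) * v ∈ Λ)
    (hfg : ∃ s : Finset ℍ[K, a, b], ↑s ⊆ (Λ : Set ℍ[K, a, b]) ∧
      ∀ v ∈ Λ, ∃ f : ℍ[K, a, b] → 𝓞 K,
        v = ∑ w ∈ s, algebraMap K ℍ[K, a, b] (f w : K) * w)
    {x : ℍ[K, a, b]} (hx : x ∈ Λ) : IsIntegral ℤ (nrd x) := by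
  obtain ⟨s, hsub, hgen⟩ := hfg
  let S : Subalgebra (𝓞 K) ℍ[K, a, b] :=
    { Λ.toSubsemiring with
      algebraMap_mem' := fun c => by
        have h := hscalar c 1 Λ.one_mem
        rwa [mul_one, ← IsScalarTower.algebraMap_apply] at h }
  have HS : (Subalgebra.toSubmodule S).FG := by
    refine ⟨s, le_antisymm (Submodule.span_le.mpr fun w hw => hsub hw) ?_⟩
    intro v hv
    obtain ⟨f, hf⟩ := hgen v hv
    rw [hf]
    refine Submodule.sum_mem _ fun w hw => ?_
    have : algebraMap K ℍ[K, a, b] ((f w : K)) * w = (f w) • w := by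
      erw [Algebra.smul_def, IsScalarTower.algebraMap_apply (𝓞 K) K]
    rw [this]
    exact Submodule.smul_mem _ _ (Submodule.subset_span hw)
  have hxint : IsIntegral (𝓞 K) x := IsIntegral.of_mem_of_fg S HS x hx
  have hstarint : IsIntegral (𝓞 K) (star x) := by
    obtain ⟨p, pmonic, hp⟩ := hxint
    refine ⟨p, pmonic, ?_⟩
    have : (Polynomial.aeval (star x)) p = star ((Polynomial.aeval x) p) := by
      rw [Polynomial.aeval_eq_sum_range, Polynomial.aeval_eq_sum_range, star_sum]
      exact Finset.sum_congr rfl fun i _ => by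
        erw [QuaternionAlgebra.star_smul', star_pow]; rfl
    show (Polynomial.aeval (star x)) p = 0
    rw [this, show (Polynomial.aeval x) p = 0 from hp, star_zero]
  have hcen : (algebraMap K ℍ[K, a, b]) (nrd x) = x * star x := by
    ext <;> simp [nrd, QuaternionAlgebra.re_mul, QuaternionAlgebra.imI_mul,
      QuaternionAlgebra.imJ_mul, QuaternionAlgebra.imK_mul, ← QuaternionAlgebra.coe_pow,
      QuaternionAlgebra.re_coe, QuaternionAlgebra.imI_coe, QuaternionAlgebra.imJ_coe,
      QuaternionAlgebra.imK_coe] <;> ring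
  have hcomm : Commute x (star x) := by
    ext <;> simp [QuaternionAlgebra.re_mul, QuaternionAlgebra.imI_mul,
      QuaternionAlgebra.imJ_mul, QuaternionAlgebra.imK_mul] <;> ring
  have hmul : IsIntegral (𝓞 K) (x * star x) :=
    my_isIntegral_mul_of_commute hcomm hxint hstarint
  have hnrdK : IsIntegral (𝓞 K) (nrd x) := by
    have hinj : Function.Injective (IsScalarTower.toAlgHom (𝓞 K) K ℍ[K, a, b]) := by
      intro u v huv
      simpa using congrArg QuaternionAlgebra.re huv
    rw [← isIntegral_algHom_iff _ hinj]
    simpa [hcen] using hmul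
  exact isIntegral_trans (nrd x) hnrdK

/-- Let `A = (a,b | K)` be a totally definite quaternion algebra over a totally real
number field `K` of degree `n` with real embeddings `σ₁,…,σₙ`, let `Λ` be an
`𝓞 K`-order in `A`, and let `α` be a positive rational.  Then the minimum of the
ideal lattice `(Λ, b_α)`, i.e. the least value of
`b_α(x,x) = Tr_{K/ℚ}(trd(α x x̄)) = ∑ᵢ σᵢ(2 α nrd x)` over nonzero `x ∈ Λ`,
equals `2 n α`, and it is attained by `x ∈ Λ` exactly when `nrd x = 1`. -/
theorem stmt5 {K : Type*} [Field K] [NumberField K] (n : ℕ) (hn : 0 < n)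
    (hdeg : Module.finrank ℚ K = n)
    (σ : Fin n → (K →+* ℝ)) (hσ : Function.Injective σ)
    (a b : K) (ha : ∀ i, σ i a < 0) (hb : ∀ i, σ i b < 0)
    (Λ : Subring ℍ[K, a, b])
    -- `Λ` is stable under multiplication by ring-of-integers scalars
    (hscalar : ∀ c : 𝓞 K, ∀ v ∈ Λ, algebraMap K ℍ[K, a, b] (c : K) * v ∈ Λ)
    -- `Λ` is finitely generated as an `𝓞 K`-module
    (hfg : ∃ s : Finset ℍ[K, a, b], ↑s ⊆ (Λ : Set ℍ[K, a, b]) ∧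
      ∀ v ∈ Λ, ∃ f : ℍ[K, a, b] → 𝓞 K,
        v = ∑ w ∈ s, algebraMap K ℍ[K, a, b] (f w : K) * w)
    -- `Λ` contains a `K`-basis of `A`, i.e. spans `A` over `K`
    (hspan : Submodule.span K (Λ : Set ℍ[K, a, b]) = ⊤)
    (α : ℚ) (hα : 0 < α) :
    IsLeast {r : ℝ | ∃ x ∈ Λ, x ≠ 0 ∧
        r = ∑ i, σ i (2 * algebraMap ℚ K α * nrd x)} (2 * n * α) ∧
    ∀ x ∈ Λ, x ≠ 0 →
      ((∑ i, σ i (2 * algebraMap ℚ K α * nrd x)) = 2 * n * α ↔ nrd x = 1) := by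
  -- positivity of each embedding of the reduced norm
  have hpos : ∀ (x : ℍ[K, a, b]), x ≠ 0 → ∀ i, 0 < σ i (nrd x) := by
    intro x hx i
    have key : σ i (nrd x) = σ i x.re ^ 2 - σ i a * σ i x.imI ^ 2 - σ i b * σ i x.imJ ^ 2
        + σ i a * σ i b * σ i x.imK ^ 2 := by
      simp [nrd, map_sub, map_add, map_mul, map_pow]
    rw [key]
    have hinj : ∀ t : K, t ≠ 0 → σ i t ≠ 0 := fun t ht => by
      intro h0
      exact ht ((σ i).injective (by rw [h0, map_zero]))
    have hcomp : x.re ≠ 0 ∨ x.imI ≠ 0 ∨ x.imJ ≠ 0 ∨ x.imK ≠ 0 := by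
      by_contra hcon
      push_neg at hcon
      obtain ⟨h1, h2, h3, h4⟩ := hcon
      exact hx (by ext <;> simp [h1, h2, h3, h4])
    have s1 := sq_nonneg (σ i x.re)
    have s2 := sq_nonneg (σ i x.imI)
    have s3 := sq_nonneg (σ i x.imJ)
    have s4 := sq_nonneg (σ i x.imK)
    have hab : 0 < σ i a * σ i b := mul_pos_of_neg_of_neg (ha i) (hb i)
    rcases hcomp with h | h | h | h
    · have := pow_pos (abs_pos.mpr (hinj _ h)) 2
      rw [sq_abs] at this
      nlinarith [ha i, hb i]
    · have := pow_pos (abs_pos.mpr (hinj _ h)) 2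
      rw [sq_abs] at this
      nlinarith [ha i, hb i]
    · have := pow_pos (abs_pos.mpr (hinj _ h)) 2
      rw [sq_abs] at this
      nlinarith [ha i, hb i]
    · have := pow_pos (abs_pos.mpr (hinj _ h)) 2
      rw [sq_abs] at this
      nlinarith [ha i, hb i]
  -- product of embeddings of the reduced norm is at least 1
  have hNK : ∀ x ∈ Λ, x ≠ 0 → 1 ≤ ∏ i, σ i (nrd x) := by
    intro x hx hx0
    have hint : IsIntegral ℤ (nrd x) := my_nrd_int Λ hscalar hfg hx
    let y : 𝓞 K := ⟨nrd x, hint⟩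
    have hqr : ((Algebra.norm ℤ y : ℤ) : ℝ) = ∏ i, σ i (nrd x) := by
      have h1 := my_norm_prod n hdeg σ hσ (nrd x)
      have h2 : (Algebra.norm ℤ y : ℚ) = Algebra.norm ℚ (nrd x) := Algebra.coe_norm_int y
      rw [← h1, ← h2]
      push_cast
      ring
    have hprodpos : 0 < ∏ i, σ i (nrd x) :=
      Finset.prod_pos fun i _ => hpos x hx0 i
    have hposint : 0 < Algebra.norm ℤ y := by
      have : (0 : ℝ) < ((Algebra.norm ℤ y : ℤ) : ℝ) := by rw [hqr]; exact hprodpos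
      exact_mod_cast this
    have h1le : (1 : ℤ) ≤ Algebra.norm ℤ y := hposint
    calc (1 : ℝ) = ((1 : ℤ) : ℝ) := by norm_num
      _ ≤ ((Algebra.norm ℤ y : ℤ) : ℝ) := by exact_mod_cast h1le
      _ = ∏ i, σ i (nrd x) := hqr
  -- rewriting the sum
  have hsum_rw : ∀ x : ℍ[K, a, b],
      ∑ i, σ i (2 * algebraMap ℚ K α * nrd x) = 2 * (α : ℝ) * ∑ i, σ i (nrd x) := by
    intro x
    rw [Finset.mul_sum]
    refine Finset.sum_congr rfl fun i _ => ?_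
    rw [map_mul, map_mul, map_ofNat, eq_ratCast (algebraMap ℚ K) α, map_ratCast, mul_assoc]
  have key : ∀ x ∈ Λ, x ≠ 0 → ((n : ℝ) ≤ ∑ i, σ i (nrd x) ∧
      (∑ i, σ i (nrd x) = n → ∀ i, σ i (nrd x) = 1)) := fun x hx hx0 =>
    my_amgm n (fun i => σ i (nrd x)) (fun i => hpos x hx0 i) (hNK x hx hx0)
  have hnrd1 : nrd (1 : ℍ[K, a, b]) = 1 := by simp [nrd]
  have hαR : (0 : ℝ) < (α : ℝ) := by exact_mod_cast hα
  refine ⟨⟨⟨1, Λ.one_mem, one_ne_zero, ?_⟩, ?_⟩, ?_⟩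
  · rw [hsum_rw 1, hnrd1]
    simp
    ring
  · rintro r ⟨x, hx, hx0, rfl⟩
    rw [hsum_rw x]
    have hge := (key x hx hx0).1
    nlinarith
  · intro x hx hx0
    constructor
    · intro heq
      rw [hsum_rw x] at heq
      have hS : ∑ i, σ i (nrd x) = (n : ℝ) := by
        apply mul_left_cancel₀ (show (2 : ℝ) * (α : ℝ) ≠ 0 by positivity)
        rw [heq]; ring
      have hall := (key x hx hx0).2 hS
      -- all embeddings of nrd x equal 1, so nrd x = 1
      have hzero : ((Algebra.norm ℚ (nrd x - 1) : ℚ) : ℝ) = 0 := by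
        rw [my_norm_prod n hdeg σ hσ (nrd x - 1)]
        refine Finset.prod_eq_zero (Finset.mem_univ ⟨0, hn⟩) ?_
        rw [map_sub, map_one, hall ⟨0, hn⟩, sub_self]
      have hnz : Algebra.norm ℚ (nrd x - 1) = 0 := by exact_mod_cast hzero
      have hsub : nrd x - 1 = 0 := Algebra.norm_eq_zero_iff.mp hnz
      exact sub_eq_zero.mp hsub
    · intro h1
      rw [hsum_rw x, h1]
      simp
      ring
end

section
/- Let A be a division ℚ-algebra containing elements x, y, z satisfying the binary tetrahedral relations x² = y³ = z³ = xyz with z of order 6 in A×, and suppose y ∉ ℚ(z). Then the ℚ-subalgebra of A generated by {x, y, z} has ℚ-dimension 4. -/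
private lemma aux_plane {A : Type*} [DivisionRing A] [Algebra ℚ A]
    (Z : A) (hZ2 : Z ^ 2 = Z - 1) (p q r s : ℚ) :
    (p • (1:A) + q • Z) * (r • (1:A) + s • Z)
      = (p*r - q*s) • (1:A) + (p*s + q*r + q*s) • Z := by
  rw [add_mul, mul_add, mul_add, smul_mul_smul, smul_mul_smul, smul_mul_smul,
    smul_mul_smul, one_mul, mul_one, one_mul, ← pow_two, hZ2]
  match_scalars <;> ring

private lemma aux_key2 {A : Type*} [DivisionRing A] [Algebra ℚ A]
    (Z : A) (hZ2 : Z ^ 2 = Z - 1) (a b : ℚ) (hab : a • (1:A) + b • Z = 0) :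
    a = 0 ∧ b = 0 := by
  by_cases hb : b = 0
  · subst hb
    refine ⟨?_, rfl⟩
    rw [zero_smul, add_zero, smul_eq_zero] at hab
    rcases hab with h | h
    · exact h
    · exact absurd h one_ne_zero
  · exfalso
    set q : ℚ := b⁻¹ * (-a) with hqdef
    have hq : Z = q • (1:A) := by
      have h' : b • Z = (-a) • (1:A) := by
        rw [neg_smul]
        exact eq_neg_of_add_eq_zero_right hab
      calc Z = b⁻¹ • (b • Z) := by rw [smul_smul, inv_mul_cancel₀ hb, one_smul]
        _ = b⁻¹ • ((-a) • (1:A)) := by rw [h']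
        _ = q • (1:A) := by rw [smul_smul]
    have hq2 : (q*q) • (1:A) = (q - 1) • (1:A) := by
      calc (q*q) • (1:A) = (q • (1:A)) * (q • (1:A)) := by
            rw [smul_mul_smul, one_mul]
        _ = Z * Z := by rw [← hq]
        _ = Z ^ 2 := (pow_two Z).symm
        _ = Z - 1 := hZ2
        _ = q • (1:A) - (1:ℚ) • (1:A) := by rw [hq, one_smul]
        _ = (q - 1) • (1:A) := by rw [sub_smul]
    have hinj := smul_left_injective ℚ (one_ne_zero : (1:A) ≠ 0) hq2
    nlinarith [sq_nonneg (2*q - 1)]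

private lemma aux_indep {A : Type*} [DivisionRing A] [Algebra ℚ A]
    (Z Y : A) (hZ2 : Z ^ 2 = Z - 1)
    (hy : Y ∉ Algebra.adjoin ℚ ({Z} : Set A)) (a b c d : ℚ)
    (hg : a • (1:A) + b • Z + c • Y + d • (Z * Y) = 0) :
    a = 0 ∧ b = 0 ∧ c = 0 ∧ d = 0 := by
  have hYspan : ∀ p q : ℚ, Y ≠ p • (1:A) + q • Z := by
    intro p q h
    apply hy
    rw [h]
    exact add_mem (SMulMemClass.smul_mem p (one_mem _))
      (SMulMemClass.smul_mem q (Algebra.subset_adjoin rfl))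
  have hcd : c = 0 ∧ d = 0 := by
    by_contra hne
    have hn : c^2 + c*d + d^2 ≠ 0 := by
      intro h0
      apply hne
      constructor <;> nlinarith [sq_nonneg (2*c + d), sq_nonneg (2*d + c)]
    set n : ℚ := c^2 + c*d + d^2 with hndef
    have hg2 : c • Y + d • (Z * Y) + (a • (1:A) + b • Z) = 0 := by
      rw [← hg]; module
    have huY : (c • (1:A) + d • Z) * Y = (-a) • (1:A) + (-b) • Z := by
      rw [add_mul, smul_mul_assoc, smul_mul_assoc, one_mul]
      have h3 := eq_neg_of_add_eq_zero_left hg2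
      rw [h3]; module
    have hvu : (((c+d)/n) • (1:A) + (-d/n) • Z) * (c • (1:A) + d • Z) = 1 := by
      rw [aux_plane Z hZ2]
      have e1 : (c+d)/n * c - (-d/n) * d = 1 := by field_simp; ring
      have e2 : (c+d)/n * d + (-d/n) * c + (-d/n) * d = 0 := by field_simp; ring
      rw [e1, e2, zero_smul, add_zero, one_smul]
    have hYeq : Y = (((c+d)/n) • (1:A) + (-d/n) • Z) * ((c • (1:A) + d • Z) * Y) := by
      rw [← mul_assoc, hvu, one_mul]
    rw [huY, aux_plane Z hZ2] at hYeq
    exact hYspan _ _ hYeq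
  obtain ⟨hc, hd⟩ := hcd
  have hab : a = 0 ∧ b = 0 := by
    apply aux_key2 Z hZ2
    rw [hc, hd, zero_smul, zero_smul, add_zero, add_zero] at hg
    exact hg
  exact ⟨hab.1, hab.2, hc, hd⟩

/-- Let `A` be a finite-dimensional division `ℚ`-algebra containing units `x, y, z`
satisfying the binary tetrahedral relations `x² = y³ = z³ = xyz` with `z` of
order 6, and suppose `y ∉ ℚ(z)`.  Then the `ℚ`-subalgebra of `A` generated by
`{x, y, z}` has `ℚ`-dimension 4. -/
theorem stmt10 {A : Type*} [DivisionRing A] [Algebra ℚ A] [FiniteDimensional ℚ A]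
    (x y z : Aˣ)
    (h1 : x ^ 2 = y ^ 3) (h2 : y ^ 3 = z ^ 3) (h3 : z ^ 3 = x * y * z)
    (hz : orderOf z = 6)
    (hy : (y : A) ∉ Algebra.adjoin ℚ ({(z : A)} : Set A)) :
    Module.finrank ℚ
      (Algebra.adjoin ℚ ({(x : A), (y : A), (z : A)} : Set A)) = 4 := by
  -- notation
  set X : A := (x : A) with hX
  set Y : A := (y : A) with hYdef
  set Z : A := (z : A) with hZdef
  -- unit-level consequences
  have hxu : x = y * z := by
    have h : x * x = x * (y * z) := by
      have := h1.trans (h2.trans h3)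
      rwa [pow_two, mul_assoc] at this
    exact mul_left_cancel h
  have hzyz_u : z * y * z = y * y := by
    have h : y * (z * y * z) = y * (y * y) := by
      have := h1
      rw [hxu] at this
      rw [pow_two, pow_succ, pow_two] at this
      calc y * (z * y * z) = y * z * (y * z) := by noncomm_ring
        _ = y * y * y := this
        _ = y * (y * y) := by noncomm_ring
    exact mul_left_cancel h
  have hyzy_u : y * z * y = z * z := by
    have h : (y * z * y) * z = (z * z) * z := by
      have := h1.trans h2
      rw [hxu] at this
      rw [pow_two, pow_succ, pow_two] at this
      calc (y * z * y) * z = y * z * (y * z) := by noncomm_ring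
        _ = z * z * z := this
    exact mul_right_cancel h
  -- algebra-level facts about Z
  have hZ6 : Z ^ 6 = 1 := by
    have : z ^ 6 = 1 := by rw [← hz]; exact pow_orderOf_eq_one z
    have := congrArg (Units.val) this
    push_cast at this
    simpa using this
  have hz3ne : z ^ 3 ≠ 1 := by
    intro h
    have := orderOf_dvd_of_pow_eq_one h
    rw [hz] at this
    omega
  have hZ3ne : Z ^ 3 ≠ 1 := by
    intro h
    apply hz3ne
    ext
    push_cast
    simpa using h
  have hZ3 : Z ^ 3 = -1 := by
    have h0 : (Z ^ 3 - 1) * (Z ^ 3 + 1) = 0 := by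
      have he : (Z ^ 3 - 1) * (Z ^ 3 + 1) = Z ^ 6 - 1 := by noncomm_ring
      rw [he, hZ6, sub_self]
    rcases mul_eq_zero.1 h0 with h | h
    · exact absurd (sub_eq_zero.mp h) hZ3ne
    · exact eq_neg_of_add_eq_zero_left h
  have hz2ne : Z ≠ -1 := by
    intro h
    have : z ^ 2 = 1 := by
      ext
      push_cast
      rw [← hZdef, h]; norm_num
    have := orderOf_dvd_of_pow_eq_one this
    rw [hz] at this
    omega
  have hZ2 : Z ^ 2 = Z - 1 := by
    have h0 : (Z + 1) * (Z ^ 2 - Z + 1) = 0 := by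
      have he : (Z + 1) * (Z ^ 2 - Z + 1) = Z ^ 3 + 1 := by noncomm_ring
      rw [he, hZ3, neg_add_cancel]
    rcases mul_eq_zero.1 h0 with h | h
    · exact absurd (eq_neg_of_add_eq_zero_left h) hz2ne
    · have h2 : Z ^ 2 - (Z - 1) = 0 := by
        rw [show Z ^ 2 - (Z - 1) = Z ^ 2 - Z + 1 by noncomm_ring]; exact h
      exact sub_eq_zero.mp h2
  -- Y facts
  have hY3 : Y ^ 3 = -1 := by
    have := congrArg (Units.val) h2
    push_cast at this
    simp only [← hYdef, ← hZdef] at this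
    rw [this, hZ3]
  have hYne : Y ≠ -1 := by
    intro h
    apply hy
    rw [h]
    exact neg_mem (one_mem _)
  have hY2 : Y ^ 2 = Y - 1 := by
    have h0 : (Y + 1) * (Y ^ 2 - Y + 1) = 0 := by
      have he : (Y + 1) * (Y ^ 2 - Y + 1) = Y ^ 3 + 1 := by noncomm_ring
      rw [he, hY3, neg_add_cancel]
    rcases mul_eq_zero.1 h0 with h | h
    · exact absurd (eq_neg_of_add_eq_zero_left h) hYne
    · have h2 : Y ^ 2 - (Y - 1) = 0 := by
        rw [show Y ^ 2 - (Y - 1) = Y ^ 2 - Y + 1 by noncomm_ring]; exact h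
      exact sub_eq_zero.mp h2
  -- casting the relations
  have hZYZ : Z * Y * Z = Y - 1 := by
    have := congrArg (Units.val) hzyz_u
    push_cast at this
    simp only [← hYdef, ← hZdef] at this
    rw [this, ← pow_two, hY2]
  have hYZY : Y * Z * Y = Z - 1 := by
    have := congrArg (Units.val) hyzy_u
    push_cast at this
    simp only [← hYdef, ← hZdef] at this
    rw [this, ← pow_two, hZ2]
  have hXYZ : X = Y * Z := by
    have := congrArg (Units.val) hxu
    push_cast at this
    simp only [← hYdef, ← hZdef, ← hX] at this
    exact this
  have hZinv : (1 - Z) * Z = 1 := by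
    rw [show (1 - Z) * Z = Z - Z ^ 2 by noncomm_ring, hZ2]
    noncomm_ring
  have hcomm : Y * Z = Y + Z - Z * Y - 1 := by
    calc Y * Z = ((1 - Z) * Z) * (Y * Z) := by rw [hZinv, one_mul]
      _ = (1 - Z) * (Z * Y * Z) := by noncomm_ring
      _ = (1 - Z) * (Y - 1) := by rw [hZYZ]
      _ = Y + Z - Z * Y - 1 := by noncomm_ring
  -- the candidate spanning set
  set W : Submodule ℚ A := Submodule.span ℚ ({1, Z, Y, Z * Y} : Set A) with hW
  have m1 : (1 : A) ∈ W := Submodule.subset_span (by simp)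
  have mZ : Z ∈ W := Submodule.subset_span (by simp)
  have mY : Y ∈ W := Submodule.subset_span (by simp)
  have mZY : Z * Y ∈ W := Submodule.subset_span (by simp)
  have eZZ : Z * Z = Z - 1 := by rw [← pow_two, hZ2]
  have eYY : Y * Y = Y - 1 := by rw [← pow_two, hY2]
  have mYZ : Y * Z ∈ W := by
    rw [hcomm]; exact sub_mem (sub_mem (add_mem mY mZ) mZY) m1
  -- multiplicative closure
  have hWW : W * W ≤ W := by
    rw [hW, Submodule.span_mul_span]
    apply Submodule.span_le.mpr
    rintro w hw
    rw [Set.mem_mul] at hw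
    obtain ⟨a, ha, b, hb, rfl⟩ := hw
    simp only [Set.mem_insert_iff, Set.mem_singleton_iff] at ha hb
    rcases ha with rfl | rfl | rfl | rfl <;> rcases hb with rfl | rfl | rfl | rfl
    · rw [one_mul]; exact m1
    · rw [one_mul]; exact mZ
    · rw [one_mul]; exact mY
    · rw [one_mul]; exact mZY
    · rw [mul_one]; exact mZ
    · rw [eZZ]; exact sub_mem mZ m1
    · exact mZY
    · rw [show Z * (Z * Y) = (Z * Z) * Y by noncomm_ring, eZZ,
        show (Z - 1) * Y = Z * Y - Y by noncomm_ring]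
      exact sub_mem mZY mY
    · rw [mul_one]; exact mY
    · exact mYZ
    · rw [eYY]; exact sub_mem mY m1
    · rw [show Y * (Z * Y) = Y * Z * Y by noncomm_ring, hYZY]
      exact sub_mem mZ m1
    · rw [mul_one]; exact mZY
    · rw [show Z * Y * Z = Z * Y * Z by rfl, hZYZ]
      exact sub_mem mY m1
    · rw [show Z * Y * Y = Z * (Y * Y) by noncomm_ring, eYY,
        show Z * (Y - 1) = Z * Y - Z by noncomm_ring]
      exact sub_mem mZY mZ
    · rw [show Z * Y * (Z * Y) = Z * (Y * Z * Y) by noncomm_ring, hYZY,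
        show Z * (Z - 1) = Z * Z - Z by noncomm_ring, eZZ,
        show Z - 1 - Z = -1 by noncomm_ring]
      exact neg_mem m1
  have hmulW : ∀ a b : A, a ∈ W → b ∈ W → a * b ∈ W := fun a b ha hb =>
    hWW (Submodule.mul_mem_mul ha hb)
  -- W as a subalgebra
  let B : Subalgebra ℚ A := Submodule.toSubalgebra W m1 hmulW
  have hadj : Algebra.adjoin ℚ ({X, Y, Z} : Set A) = B := by
    apply le_antisymm
    · apply Algebra.adjoin_le
      rintro w hw
      simp only [Set.mem_insert_iff, Set.mem_singleton_iff] at hw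
      have hx2 : (x : A) = Y * Z := by rw [← hX]; exact hXYZ
      rcases hw with rfl | rfl | rfl
      · show (x : A) ∈ W
        rw [hx2]; exact mYZ
      · exact mY
      · exact mZ
    · intro w hw
      have hle : W ≤ Subalgebra.toSubmodule (Algebra.adjoin ℚ ({X, Y, Z} : Set A)) := by
        rw [hW]
        apply Submodule.span_le.mpr
        rintro v hv
        simp only [Set.mem_insert_iff, Set.mem_singleton_iff] at hv
        rcases hv with rfl | rfl | rfl | rfl
        · exact (Subalgebra.mem_toSubmodule _).mpr (one_mem _)
        · exact (Subalgebra.mem_toSubmodule _).mpr (Algebra.subset_adjoin (by simp))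
        · exact (Subalgebra.mem_toSubmodule _).mpr (Algebra.subset_adjoin (by simp))
        · exact (Subalgebra.mem_toSubmodule _).mpr
            (mul_mem (Algebra.subset_adjoin (by simp)) (Algebra.subset_adjoin (by simp)))
      exact hle hw
  -- linear independence of 1, Z, Y, Z*Y
  have hli : LinearIndependent ℚ ![(1:A), Z, Y, Z * Y] := by
    rw [Fintype.linearIndependent_iff]
    intro g hg
    simp only [Fin.sum_univ_four, Matrix.cons_val_zero, Matrix.cons_val_one,
      Matrix.head_cons, Matrix.cons_val_two, Matrix.tail_cons, Matrix.cons_val_three] at hg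
    obtain ⟨ha, hb, hc, hd⟩ := aux_indep Z Y hZ2 hy (g 0) (g 1) (g 2) (g 3) hg
    intro i
    fin_cases i <;> simp [ha, hb, hc, hd]
  -- conclude
  rw [hadj, ← Subalgebra.finrank_toSubmodule]
  have hrange : W = Submodule.span ℚ (Set.range ![(1:A), Z, Y, Z * Y]) := by
    rw [hW]
    congr 1
    ext w
    simp only [Set.mem_insert_iff, Set.mem_singleton_iff, Matrix.range_cons,
      Matrix.range_empty, Set.union_empty, Set.mem_union, Set.mem_range]
  have : Subalgebra.toSubmodule B = W := rfl
  rw [this, hrange, finrank_span_eq_card hli]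
  simp
end
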